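/- arXiv:2407.21653 — 4 statements merged into one kernel-verified Lean document; each statement's English description precedes it below -/
import Mathlib

section
/- For any permutation w of {1,...,n}, the number of inversions inv(w) satisfies (1/2)·dis(w) ≤ inv(w) ≤ dis(w), where dis(w) = Σ_{i=1}^n |i - w(i)| is the total displacement. -/
/-!
Each inversion `i < j`, `w j < w i` is charged to one unit step of displacement: to the
step `j - 1 → j` of the rightward path of `i` if `j ≤ w i`, and otherwise to the step
`w i → w i + 1` of the leftward path of `j`. This charging is injective, so `inv ≤ dis`.

Conversely, if `w i > i` then at most `i` of the `w i` positions carrying a smaller value lie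
left of `i`, so at least `w i - i` inversions have `i` as their left end; symmetrically for
`w i < i`. Summing over `i` counts every inversion at most twice, so `dis ≤ 2 inv`.
-/

open Finset Function

namespace DiaconisGraham

variable {n : ℕ}

def inversions (f : Fin n → ℕ) : Finset (Fin n × Fin n) :=
  {p | p.1 < p.2 ∧ f p.2 < f p.1}

def displacement (f : Fin n → ℕ) : ℕ :=
  ∑ i : Fin n, ((i : ℤ) - (f i : ℤ)).natAbs

/-- The pairs `⟨i, k⟩` such that the path from `i` to `f i` crosses the step `k → k + 1`. -/
def crossings (f : Fin n → ℕ) : Finset ((_ : Fin n) × ℕ) :=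
  univ.sigma fun i => Ico (min (i : ℕ) (f i)) (max (i : ℕ) (f i))

lemma card_crossings (f : Fin n → ℕ) : #(crossings f) = displacement f := by
  rw [crossings, card_sigma]
  refine sum_congr rfl fun i _ => ?_
  rw [Nat.card_Ico]
  omega

lemma card_inversions_le_displacement {f : Fin n → ℕ} (hf : Injective f) :
    #(inversions f) ≤ displacement f := by
  rw [← card_crossings]
  refine card_le_card_of_injOn
    (fun p => if (p.2 : ℕ) ≤ f p.1 then ⟨p.1, p.2 - 1⟩ else ⟨p.2, f p.1⟩) ?_ ?_
  · rintro ⟨i, j⟩ hij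
    simp only [inversions, coe_filter, mem_univ, true_and, Set.mem_ofPred_eq] at hij
    have := Fin.lt_def.mp hij.1
    dsimp only
    split_ifs <;> simp only [crossings, mem_coe, mem_sigma, mem_univ, mem_Ico, true_and] <;> omega
  · rintro ⟨i, j⟩ hij ⟨i', j'⟩ hij' h
    simp only [inversions, coe_filter, mem_univ, true_and, Set.mem_ofPred_eq] at hij hij'
    have := Fin.lt_def.mp hij.1
    have := Fin.lt_def.mp hij'.1
    have := hf.eq_iff (a := i) (b := i')
    dsimp only at h
    split_ifs at h <;> simp only [Sigma.mk.injEq, heq_eq_eq] at h <;>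
      simp only [Prod.mk.injEq, Fin.ext_iff] at * <;> omega

lemma card_inversions_eq_sum_left (f : Fin n → ℕ) :
    #(inversions f) = ∑ i, #{j | i < j ∧ f j < f i} := by
  simp only [inversions, card_filter, Fintype.sum_prod_type]

lemma card_inversions_eq_sum_right (f : Fin n → ℕ) :
    #(inversions f) = ∑ j, #{i | i < j ∧ f j < f i} := by
  simp only [inversions, card_filter, Fintype.sum_prod_type_right]

lemma card_filter_apply_lt (w : Equiv.Perm (Fin n)) (c : Fin n) : #{j | w j < c} = c := by
  rw [card_equiv w (t := Iio c) (by simp), Fin.card_Iio]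

lemma val_apply_le_add_card (w : Equiv.Perm (Fin n)) (i : Fin n) :
    (w i : ℕ) ≤ i + #{j | i < j ∧ w j < w i} := by
  calc (w i : ℕ) = #{j | w j < w i} := (card_filter_apply_lt w (w i)).symm
    _ ≤ #(Iio i ∪ ({j | i < j ∧ w j < w i} : Finset _)) := card_le_card fun j hj => by
        simp only [mem_filter, mem_univ, true_and, mem_union, mem_Iio] at hj ⊢
        rcases lt_trichotomy j i with h | rfl | h
        exacts [.inl h, absurd hj (lt_irrefl _), .inr ⟨h, hj⟩]
    _ ≤ i + #{j | i < j ∧ w j < w i} := by grw [card_union_le, Fin.card_Iio]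

lemma val_le_apply_add_card (w : Equiv.Perm (Fin n)) (i : Fin n) :
    (i : ℕ) ≤ w i + #{j | j < i ∧ w i < w j} := by
  calc (i : ℕ) = #(Iio i) := (Fin.card_Iio i).symm
    _ ≤ #(({j | w j < w i} : Finset _) ∪ ({j | j < i ∧ w i < w j} : Finset _)) :=
      card_le_card fun j hj => by
        simp only [mem_filter, mem_univ, true_and, mem_union, mem_Iio] at hj ⊢
        rcases lt_trichotomy (w j) (w i) with h | h | h
        exacts [.inl h, absurd (w.injective h ▸ hj) (lt_irrefl _), .inr ⟨hj, h⟩]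
    _ ≤ w i + #{j | j < i ∧ w i < w j} := by grw [card_union_le, card_filter_apply_lt]

lemma natAbs_sub_le_card_add_card (w : Equiv.Perm (Fin n)) (i : Fin n) :
    ((i : ℤ) - (w i : ℤ)).natAbs ≤
      #{j | i < j ∧ w j < w i} + #{j | j < i ∧ w i < w j} := by
  have := val_apply_le_add_card w i
  have := val_le_apply_add_card w i
  omega

lemma displacement_le_two_mul_card_inversions (w : Equiv.Perm (Fin n)) :
    displacement (fun i => w i) ≤ 2 * #(inversions fun i => w i) :=
  calc displacement (fun i => w i)
      ≤ ∑ i, (#{j | i < j ∧ w j < w i} + #{j | j < i ∧ w i < w j}) :=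
        sum_le_sum fun i _ => natAbs_sub_le_card_add_card w i
    _ = 2 * #(inversions fun i => w i) := by
        rw [sum_add_distrib, two_mul]
        nth_rw 1 [card_inversions_eq_sum_left]
        rw [card_inversions_eq_sum_right]
        simp only [Fin.val_fin_lt]

end DiaconisGraham

/-- **Diaconis–Graham inequality.** For any permutation `w` of `{1,…,n}`,
`dis(w)/2 ≤ inv(w) ≤ dis(w)`, where `dis(w) = ∑ᵢ |i - w(i)|` and
`inv(w)` is the number of inversions. -/
theorem diaconis_graham (n : ℕ) (w : Equiv.Perm (Fin n)) :
    (∑ i : Fin n, (((i : ℕ) : ℤ) - ((w i : ℕ) : ℤ)).natAbs) ≤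
      2 * (Finset.univ.filter fun p : Fin n × Fin n => p.1 < p.2 ∧ w p.2 < w p.1).card ∧
    (Finset.univ.filter fun p : Fin n × Fin n => p.1 < p.2 ∧ w p.2 < w p.1).card ≤
      ∑ i : Fin n, (((i : ℕ) : ℤ) - ((w i : ℕ) : ℤ)).natAbs :=
  ⟨DiaconisGraham.displacement_le_two_mul_card_inversions w,
    DiaconisGraham.card_inversions_le_displacement (Fin.val_injective.comp w.injective)⟩
end

section
/- For nonnegative integers k and n, det[C_{n-2+i+j}]_{i,j=1}^k = Π_{1≤i<j≤n} (2k+i+j-1)/(i+j-1), where C_m denotes the m-th Catalan number. -/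
/-!
Let `b(m, t) = C(2m, m+t) - C(2m, m+t+1)` be the ballot numbers. Since `b(m+1, ·)` is obtained
from `b(m, ·)` by a symmetric tridiagonal operator and `b(0, ·)` is the first unit vector,
`C_{p+q} = ∑_t b(p, t) b(q, t)`. Hence the Hankel matrix factors as `(b(i, t)) · (b(n+j, t))ᵀ`
with a unitriangular first factor, and its determinant is `det (b(n+j, t))_{j,t}`.

Each `b(m, t)` is `C_m / ((m+2)⋯(m+k))` times a polynomial `h_t(m)` of degree `< k`, so this
determinant is `∏_j C_{n+j} / ((n+j+2)⋯(n+j+k))` times `det (h_t(n+j))`, and the last factor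
does not depend on `n` because it is a Vandermonde determinant in the equally spaced points
`n, …, n+k-1` times the determinant of the coefficients. Comparing with `n = 0`, where the
Hankel determinant is `1`, gives `∏_{j<k} w(n+j) / w(j)` with `w(m) = (2m)! / (m! (m+k)!)`,
and the product formula follows by induction on `n`.
-/

open Finset Polynomial Matrix
open scoped Nat

theorem Nat.cast_choose_succ_right_mul {R : Type*} [CommRing R] (N r : ℕ) :
    (N.choose (r + 1) : R) * (r + 1) = N.choose r * (N - r) := by
  rcases le_or_gt r N with h | h
  · rw [← Nat.cast_sub h]
    exact_mod_cast congrArg (Nat.cast (R := R)) (Nat.choose_succ_right_eq N r)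
  · simp [Nat.choose_eq_zero_of_lt h, Nat.choose_eq_zero_of_lt (h.trans (Nat.lt_succ_self _))]

theorem Nat.cast_factorial_mul_prod_range {R : Type*} [CommSemiring R] (a n : ℕ) :
    (a ! : R) * ∏ i ∈ range n, ((a : R) + 1 + i) = (a + n)! := by
  rw [← Nat.factorial_mul_ascFactorial, Nat.ascFactorial_eq_prod_range]
  push_cast
  rfl

theorem catalan_ne_zero (m : ℕ) : catalan m ≠ 0 :=
  right_ne_zero_of_mul (succ_mul_catalan_eq_centralBinom m ▸ Nat.centralBinom_ne_zero m)

theorem Finset.prod_range_shift_div {G : Type*} [CommGroupWithZero G] (f g : ℕ → G) {n : ℕ}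
    (hf : f n ≠ 0) (k : ℕ) :
    ∏ j ∈ range k, f (n + 1 + j) / g j =
      (∏ j ∈ range k, f (n + j) / g j) * (f (n + k) / f n) := by
  have hshift := (prod_range_succ (fun j => f (n + j)) k).symm.trans
    (prod_range_succ' (fun j => f (n + j)) k)
  simp only [add_zero, ← add_assoc, add_right_comm n _ 1] at hshift
  rw [prod_div_distrib, prod_div_distrib, div_mul_div_comm, hshift, mul_div_mul_right _ _ hf]

theorem Finset.prod_filter_fin_lt_eq_prod_range {M : Type*} [CommMonoid M] (n : ℕ)
    (F : ℕ → ℕ → M) :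
    ∏ p ∈ (univ : Finset (Fin n × Fin n)).filter (fun p => p.1 < p.2), F p.1 p.2 =
      ∏ j ∈ range n, ∏ i ∈ range j, F i j := by
  rw [prod_filter, Fintype.prod_prod_type, prod_comm,
    ← Fin.prod_univ_eq_prod_range (fun j => ∏ i ∈ range j, F i j)]
  refine prod_congr rfl fun j _ => ?_
  simp only [Fin.lt_def]
  rw [Fin.prod_univ_eq_prod_range (fun i => if i < (j : ℕ) then F i j else 1), ← prod_filter,
    range_eq_Ico, Ico_filter_lt, min_eq_right j.is_lt.le, ← range_eq_Ico]

section Vandermonde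

variable {R : Type*} [CommRing R] {n : ℕ}

theorem Matrix.det_of_eval_eq_det_vandermonde_mul (v : Fin n → R) (p : Fin n → R[X])
    (hp : ∀ j, (p j).natDegree < n) :
    (of fun i j => (p j).eval (v i)).det =
      (vandermonde v).det * (of fun i j : Fin n => (p j).coeff i).det := by
  rw [← det_mul]
  congr 1
  ext i j
  simp [mul_apply, vandermonde, eval_eq_sum_range' (hp j), ← Fin.sum_univ_eq_sum_range, mul_comm]

theorem Matrix.det_of_eval_add (v : Fin n → R) (p : Fin n → R[X])
    (hp : ∀ j, (p j).natDegree < n) (a : R) :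
    (of fun i j => (p j).eval (v i + a)).det = (of fun i j => (p j).eval (v i)).det := by
  rw [det_of_eval_eq_det_vandermonde_mul _ _ hp, det_of_eval_eq_det_vandermonde_mul _ _ hp,
    det_vandermonde_add]

end Vandermonde

section BallotStep

variable {R : Type*} [CommRing R]

def ballotStep (f : ℕ → R) : ℕ → R
  | 0 => f 0 + f 1
  | t + 1 => f t + 2 * f (t + 1) + f (t + 2)

theorem sum_ballotStep_mul_sub_mul_ballotStep (f g : ℕ → R) (N : ℕ) :
    ∑ t ∈ range (N + 1), (ballotStep f t * g t - f t * ballotStep g t) =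
      f (N + 1) * g N - f N * g (N + 1) := by
  induction N with
  | zero => simp only [zero_add, sum_range_one, ballotStep]; ring
  | succ N ih => rw [sum_range_succ, ih, ballotStep, ballotStep]; ring

end BallotStep

def ballot (m t : ℕ) : ℚ := (2 * m).choose (m + t) - (2 * m).choose (m + t + 1)

theorem ballot_eq_zero_of_lt {m t : ℕ} (h : m < t) : ballot m t = 0 := by
  simp [ballot, Nat.choose_eq_zero_of_lt (by omega : 2 * m < m + t),
    Nat.choose_eq_zero_of_lt (by omega : 2 * m < m + t + 1)]

theorem ballot_self (m : ℕ) : ballot m m = 1 := by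
  simp [ballot, ← two_mul]

theorem ballot_zero_right (m : ℕ) : ballot m 0 = catalan m := by
  have hcat : ((m : ℚ) + 1) * catalan m = (2 * m).choose m := by
    exact_mod_cast succ_mul_catalan_eq_centralBinom m
  have hchoose := Nat.cast_choose_succ_right_mul (R := ℚ) (2 * m) m
  apply mul_left_cancel₀ (by positivity : (m : ℚ) + 1 ≠ 0)
  simp only [ballot, add_zero]
  push_cast at hchoose ⊢
  linear_combination -hcat - hchoose

theorem ballot_succ_left (m : ℕ) : ballot (m + 1) = ballotStep (ballot m) := by
  have hm : 2 * (m + 1) = 2 * m + 1 + 1 := by ring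
  funext t
  cases t with
  | zero =>
    have hsymm := Nat.choose_symm_half m
    simp only [ballot, ballotStep, hm, add_zero, Nat.choose_succ_succ', ← add_assoc] at hsymm ⊢
    push_cast [hsymm]
    ring
  | succ t =>
    simp only [ballot, ballotStep, hm, Nat.choose_succ_succ', ← add_assoc, Nat.add_right_comm m 1]
    push_cast
    ring

theorem ballot_succ_right_mul (m t : ℕ) :
    ((m : ℚ) + t + 2) * (2 * t + 1) * ballot m (t + 1) = (2 * t + 3) * (m - t) * ballot m t := by
  have e1 := Nat.cast_choose_succ_right_mul (R := ℚ) (2 * m) (m + t)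
  have e2 := Nat.cast_choose_succ_right_mul (R := ℚ) (2 * m) (m + t + 1)
  simp only [ballot, ← add_assoc]
  push_cast at e1 e2 ⊢
  linear_combination (2 * (t : ℚ) + 3) * e1 - (2 * (t : ℚ) + 1) * e2

theorem sum_range_ballot_mul_of_lt_of_le {p N M : ℕ} (hp : p < N) (hNM : N ≤ M)
    (g : ℕ → ℚ) :
    ∑ t ∈ range M, ballot p t * g t = ∑ t ∈ range N, ballot p t * g t := by
  obtain ⟨r, rfl⟩ := Nat.exists_eq_add_of_le hNM
  rw [sum_range_add, add_eq_left]
  exact sum_eq_zero fun t _ => by rw [ballot_eq_zero_of_lt (by omega), zero_mul]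

theorem sum_range_ballot_mul_ballot {p N : ℕ} (q : ℕ) (hp : p < N) :
    ∑ t ∈ range N, ballot p t * ballot q t = catalan (p + q) := by
  induction p generalizing q N with
  | zero =>
    rw [sum_eq_single_of_mem 0 (mem_range.2 hp) fun t _ ht => by
      rw [ballot_eq_zero_of_lt (Nat.pos_of_ne_zero ht), zero_mul]]
    simp [ballot_zero_right]
  | succ p ih =>
    set L := N + q
    have hstep := sum_ballotStep_mul_sub_mul_ballotStep (ballot p) (ballot q) L
    rw [ballot_eq_zero_of_lt (by omega : p < L + 1), ballot_eq_zero_of_lt (by omega : q < L + 1),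
      zero_mul, mul_zero, sub_zero, sum_sub_distrib, sub_eq_zero, ← ballot_succ_left,
      ← ballot_succ_left] at hstep
    rw [← sum_range_ballot_mul_of_lt_of_le hp (by omega : N ≤ L + 1), hstep,
      ih (q + 1) (by omega), add_assoc, add_comm 1 q]

/-- `ballot m t / catalan m = (2t+1) m(m-1)⋯(m-t+1) / ((m+2)⋯(m+t+1))`; multiplying by
`(m+2)⋯(m+d+1)` gives `(ballotPoly d t).eval m`. -/
noncomputable def ballotPoly (d t : ℕ) : ℚ[X] :=
  C (2 * t + 1 : ℚ) * (∏ s ∈ range t, (X - C (s : ℚ))) *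
    ∏ s ∈ Ico t d, (X + C ((s : ℚ) + 2))

theorem natDegree_ballotPoly_le {d t : ℕ} (ht : t ≤ d) : (ballotPoly d t).natDegree ≤ d := by
  have hfall : (∏ s ∈ range t, (X - C (s : ℚ))).Monic :=
    monic_prod_of_monic _ _ fun s _ => monic_X_sub_C _
  have hrise : (∏ s ∈ Ico t d, (X + C ((s : ℚ) + 2))).Monic :=
    monic_prod_of_monic _ _ fun s _ => monic_X_add_C _
  rw [ballotPoly, mul_assoc]
  refine (natDegree_C_mul_le _ _).trans_eq ?_
  rw [hfall.natDegree_mul hrise, natDegree_prod_of_monic _ _ fun s _ => monic_X_sub_C _,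
    natDegree_prod_of_monic _ _ fun s _ => monic_X_add_C _]
  simp only [natDegree_X_sub_C, natDegree_X_add_C, sum_const, card_range, Nat.card_Ico,
    smul_eq_mul, mul_one]
  omega

theorem ballotPoly_succ_mul {d t : ℕ} (ht : t < d) :
    C (2 * t + 1 : ℚ) * (X + C ((t : ℚ) + 2)) * ballotPoly d (t + 1) =
      C (2 * t + 3 : ℚ) * (X - C (t : ℚ)) * ballotPoly d t := by
  rw [ballotPoly, ballotPoly, prod_range_succ, prod_eq_prod_Ico_succ_bot ht]
  push_cast
  simp only [map_add, map_mul, map_one, map_natCast, map_ofNat]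
  ring

theorem ballot_mul_ascFactorial {d t : ℕ} (m : ℕ) (ht : t ≤ d) :
    ballot m t * (m + 2).ascFactorial d = catalan m * (ballotPoly d t).eval (m : ℚ) := by
  induction t with
  | zero =>
    have hrise : ((m + 2).ascFactorial d : ℚ) = ∏ s ∈ range d, ((m : ℚ) + (s + 2)) := by
      push_cast [Nat.ascFactorial_eq_prod_range]
      exact prod_congr rfl fun s _ => by ring
    simp [ballot_zero_right, ballotPoly, eval_prod, hrise]
  | succ t ih =>
    have hrec := congrArg (eval (m : ℚ)) (ballotPoly_succ_mul ht)
    simp only [eval_mul, eval_C, eval_add, eval_sub, eval_X] at hrec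
    have hpos : (2 * t + 1 : ℚ) * (m + (t + 2)) ≠ 0 := by positivity
    apply mul_left_cancel₀ hpos
    linear_combination ((m + 2).ascFactorial d : ℚ) * ballot_succ_right_mul m t -
      (catalan m : ℚ) * hrec + (2 * t + 3) * (m - t) * ih (by omega)

theorem det_ballot_eq_one (k : ℕ) : (of fun i t : Fin k => ballot i t).det = 1 := by
  rw [det_of_isLowerTriangular (of fun i t : Fin k => ballot i t)
    fun i t hit => ballot_eq_zero_of_lt (m := i) (t := t) hit]
  simp [ballot_self]

theorem det_catalan_hankel_eq_det_ballot (k n : ℕ) :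
    (of fun i j : Fin k => (catalan (n + i + j) : ℚ)).det =
      (of fun j t : Fin k => ballot (n + j) t).det := by
  have hfactor : of (fun i j : Fin k => (catalan (n + i + j) : ℚ)) =
      of (fun i t : Fin k => ballot i t) * (of fun j t : Fin k => ballot (n + j) t)ᵀ := by
    ext i j
    simp only [mul_apply, of_apply, transpose_apply,
      Fin.sum_univ_eq_sum_range (fun t => ballot i t * ballot (n + j) t),
      sum_range_ballot_mul_ballot _ i.isLt]
    ring_nf
  rw [hfactor, det_mul, det_ballot_eq_one, one_mul, det_transpose]

theorem prod_ascFactorial_mul_det_ballot (k n : ℕ) :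
    (∏ j : Fin k, ((n + j + 2).ascFactorial (k - 1) : ℚ)) *
        (of fun j t : Fin k => ballot (n + j) t).det =
      (∏ j : Fin k, (catalan (n + j) : ℚ)) *
        (of fun j t : Fin k => (ballotPoly (k - 1) t).eval ((j : ℚ) + n)).det := by
  rw [← det_mul_column, ← det_mul_column]
  congr 1
  ext j t
  simp only [of_apply]
  rw [mul_comm, ballot_mul_ascFactorial _ (by omega)]
  push_cast
  ring_nf

def hankelWeight (k m : ℕ) : ℚ := (2 * m)! / (m ! * (m + k)!)

theorem hankelWeight_ne_zero (k m : ℕ) : hankelWeight k m ≠ 0 := by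
  unfold hankelWeight
  positivity

theorem catalan_div_ascFactorial {k : ℕ} (hk : 0 < k) (m : ℕ) :
    (catalan m : ℚ) / (m + 2).ascFactorial (k - 1) = hankelWeight k m := by
  have hcat : (catalan m : ℚ) * ((m + 1)! * m !) = (2 * m)! := by
    have h := Nat.choose_mul_factorial_mul_factorial (show m ≤ 2 * m by omega)
    rw [show 2 * m - m = m by omega, ← Nat.centralBinom_eq_two_mul_choose,
      ← succ_mul_catalan_eq_centralBinom] at h
    rw [Nat.factorial_succ]
    exact_mod_cast (by rw [← h]; ring : catalan m * ((m + 1) * m ! * m !) = _)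
  have hrise : ((m + 1)! : ℚ) * (m + 2).ascFactorial (k - 1) = (m + k)! := by
    exact_mod_cast (show m + 1 + (k - 1) = m + k by omega) ▸
      Nat.factorial_mul_ascFactorial (m + 1) (k - 1)
  rw [hankelWeight, div_eq_div_iff (by positivity) (by positivity)]
  linear_combination ((m + 2).ascFactorial (k - 1) : ℚ) * hcat - (catalan m * m ! : ℚ) * hrise

theorem hankelWeight_add_div (k n : ℕ) :
    hankelWeight k (n + k) / hankelWeight k n =
      ∏ i ∈ range n, ((2 * k + i + n + 1 : ℚ) / (i + n + 1)) := by
  have hnum := Nat.cast_factorial_mul_prod_range (R := ℚ) (2 * k + n) n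
  have hden := Nat.cast_factorial_mul_prod_range (R := ℚ) n n
  rw [show 2 * k + n + n = 2 * (n + k) by ring] at hnum
  rw [← two_mul] at hden
  rw [div_eq_iff (hankelWeight_ne_zero k n), prod_div_distrib,
    prod_congr rfl fun (i : ℕ) _ =>
      show (2 * k + i + n + 1 : ℚ) = ((2 * k + n : ℕ) : ℚ) + 1 + i by push_cast; ring,
    prod_congr rfl fun (i : ℕ) _ => show (i + n + 1 : ℚ) = (n : ℚ) + 1 + i by ring,
    hankelWeight, hankelWeight, show n + k + k = 2 * k + n by ring]
  field_simp
  linear_combination ((2 * (n + k))! : ℚ) * hden - ((2 * n)! : ℚ) * hnum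

theorem prod_range_hankelWeight_div (k n : ℕ) :
    ∏ j ∈ range k, hankelWeight k (n + j) / hankelWeight k j =
      ∏ j ∈ range n, ∏ i ∈ range j, ((2 * k + i + j + 1 : ℚ) / (i + j + 1)) := by
  induction n with
  | zero => simp [div_self (hankelWeight_ne_zero _ _)]
  | succ n ih =>
    rw [prod_range_shift_div _ _ (hankelWeight_ne_zero k n), ih, hankelWeight_add_div,
      prod_range_succ]

theorem det_catalan_hankel_eq_prod (k n : ℕ) :
    (of fun i j : Fin k => (catalan (n + i + j) : ℚ)).det =
      ∏ j ∈ range k, hankelWeight k (n + j) / hankelWeight k j := by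
  have hdeg (t : Fin k) : (ballotPoly (k - 1) t).natDegree < k := by
    have := t.is_lt
    exact (natDegree_ballotPoly_le (by omega)).trans_lt (by omega)
  have hn := prod_ascFactorial_mul_det_ballot k n
  have h0 := prod_ascFactorial_mul_det_ballot k 0
  rw [det_of_eval_add (fun j : Fin k => (j : ℚ)) (fun t => ballotPoly (k - 1) t) hdeg] at hn
  simp only [Nat.cast_zero, add_zero, zero_add, det_ballot_eq_one, mul_one] at h0
  have hweight (j : Fin k) : hankelWeight k (n + j) / hankelWeight k j =
      (catalan (n + j) / (n + j + 2).ascFactorial (k - 1)) /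
        (catalan j / ((j : ℕ) + 2).ascFactorial (k - 1)) := by
    rw [catalan_div_ascFactorial j.pos, catalan_div_ascFactorial j.pos]
  have hcatalan : ∏ j : Fin k, (catalan j : ℚ) ≠ 0 :=
    prod_ne_zero_iff.2 fun j _ => Nat.cast_ne_zero.2 (catalan_ne_zero j)
  have hrise : ∏ j : Fin k, ((n + j + 2).ascFactorial (k - 1) : ℚ) ≠ 0 :=
    prod_ne_zero_iff.2 fun j _ => by positivity
  rw [det_catalan_hankel_eq_det_ballot, ← Fin.prod_univ_eq_prod_range,
    prod_congr rfl fun j _ => hweight j, prod_div_distrib, prod_div_distrib, prod_div_distrib]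
  field_simp
  linear_combination (∏ j : Fin k, (catalan j : ℚ)) * hn -
    (∏ j : Fin k, (catalan (n + j) : ℚ)) * h0

/-- **Proctor's determinant formula.** For nonnegative integers `k` and `n`,
`det[C_{n-2+i+j}]_{i,j=1}^k = ∏_{1 ≤ i < j ≤ n} (2k+i+j-1)/(i+j-1)`,
where `C_m` is the `m`-th Catalan number. (Indices `i,j` run over `Fin k`,
0-based, so the entry is `C_{n+i+j}`; the product is over pairs of 1-based
indices `1 ≤ i < j ≤ n`.) -/
theorem catalan_hankel_det (k n : ℕ) :
    Matrix.det (Matrix.of fun i j : Fin k => (catalan (n + (i : ℕ) + (j : ℕ)) : ℚ)) =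
      ∏ p ∈ (Finset.univ : Finset (Fin n × Fin n)).filter (fun p => p.1 < p.2),
        ((2 * k + ((p.1 : ℕ) + 1) + ((p.2 : ℕ) + 1) - 1 : ℚ) /
          (((p.1 : ℕ) + 1) + ((p.2 : ℕ) + 1) - 1 : ℚ)) := by
  rw [det_catalan_hankel_eq_prod, prod_range_hankelWeight_div,
    ← prod_filter_fin_lt_eq_prod_range]
  refine prod_congr rfl fun p _ => ?_
  ring
end

section
/- For p ∈ (0,1), the function γ_p = 1 − √((1−p)/p)·arccos(√(1−p)) satisfies 0 < γ_p < 1, γ_p is strictly increasing in p, γ_p → 0 as p → 0⁺, and γ_p → 1 as p → 1⁻. -/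
/-!
Substitute `θ = arccos √(1 - p) ∈ (0, π/2)`, so that `p = sin² θ` and `γ_p = 1 - θ cot θ`.
Then `0 < θ cot θ < 1` is `θ < tan θ`, and `θ cot θ` decreases on `(0, π)` because its
derivative `(sin θ cos θ - θ) / sin² θ = (sin (2θ) / 2 - θ) / sin² θ` is negative.
As `p → 0⁺`, `θ → 0` and `θ cot θ = cos θ / sinc θ → 1`; at `p = 1` the
formula for `γ_p` is continuous with value `1`.
-/

/-- `γ_p = 1 − √((1−p)/p)·arccos(√(1−p))`. -/
noncomputable def gammaP (p : ℝ) : ℝ :=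
  1 - Real.sqrt ((1 - p) / p) * Real.arccos (Real.sqrt (1 - p))

open Real Set Filter Topology

lemma arccos_sqrt_one_sub_mem_Ioo {p : ℝ} (hp : p ∈ Ioo 0 1) :
    arccos √(1 - p) ∈ Ioo 0 (π / 2) := by
  constructor
  · rw [arccos_pos]
    exact (sqrt_lt' one_pos).2 (by linarith [hp.1])
  · rw [arccos_lt_pi_div_two]
    exact sqrt_pos.2 (by linarith [hp.2])

lemma strictMonoOn_arccos_sqrt_one_sub :
    StrictMonoOn (fun p : ℝ ↦ arccos √(1 - p)) (Icc 0 1) := by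
  have h_mem : ∀ p ∈ Icc (0 : ℝ) 1, √(1 - p) ∈ Icc (-1) 1 := fun p hp ↦
    ⟨by linarith [sqrt_nonneg (1 - p)], sqrt_le_one.2 (by linarith [hp.1])⟩
  intro p hp q hq hpq
  exact strictAntiOn_arccos (h_mem q hq) (h_mem p hp)
    (sqrt_lt_sqrt (by linarith [hq.2]) (by linarith))

lemma gammaP_eq_one_sub_mul_cos_div_sin {p : ℝ} (hp : p ∈ Icc 0 1) :
    gammaP p =
      1 - arccos √(1 - p) * cos (arccos √(1 - p)) / sin (arccos √(1 - p)) := by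
  have h_nonneg : 0 ≤ 1 - p := by linarith [hp.2]
  have h_cos : cos (arccos √(1 - p)) = √(1 - p) :=
    cos_arccos (by linarith [sqrt_nonneg (1 - p)]) (sqrt_le_one.2 (by linarith [hp.1]))
  have h_sin : sin (arccos √(1 - p)) = √p := by
    rw [sin_arccos, sq_sqrt h_nonneg, sub_sub_cancel]
  rw [gammaP, h_cos, h_sin, sqrt_div h_nonneg]
  ring

lemma mul_cos_div_sin_mem_Ioo {θ : ℝ} (hθ : θ ∈ Ioo 0 (π / 2)) :
    θ * cos θ / sin θ ∈ Ioo 0 1 := by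
  have h_cos : 0 < cos θ := cos_pos_of_mem_Ioo ⟨by linarith [hθ.1, pi_pos], hθ.2⟩
  have h_sin : 0 < sin θ := sin_pos_of_pos_of_lt_pi hθ.1 (by linarith [hθ.2, pi_pos])
  refine ⟨by have := hθ.1; positivity, ?_⟩
  have h_tan := lt_tan hθ.1 hθ.2
  rw [tan_eq_sin_div_cos, lt_div_iff₀ h_cos] at h_tan
  rwa [div_lt_one h_sin]

lemma hasDerivAt_mul_cos_div_sin {θ : ℝ} (hθ : sin θ ≠ 0) :
    HasDerivAt (fun x ↦ x * cos x / sin x) ((sin θ * cos θ - θ) / sin θ ^ 2) θ := by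
  refine (((hasDerivAt_id' θ).mul (hasDerivAt_cos θ)).div (hasDerivAt_sin θ) hθ).congr_deriv ?_
  simp only [Pi.mul_apply]
  congr 1
  linear_combination -θ * sin_sq_add_cos_sq θ

lemma strictAntiOn_mul_cos_div_sin :
    StrictAntiOn (fun θ ↦ θ * cos θ / sin θ) (Ioo 0 π) := by
  have h_sin : ∀ θ ∈ Ioo 0 π, sin θ ≠ 0 := fun θ hθ ↦ (sin_pos_of_pos_of_lt_pi hθ.1 hθ.2).ne'
  refine strictAntiOn_of_deriv_neg (convex_Ioo 0 π)
    (fun θ hθ ↦ (hasDerivAt_mul_cos_div_sin (h_sin θ hθ)).continuousAt.continuousWithinAt) ?_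
  intro θ hθ
  rw [interior_Ioo] at hθ
  rw [(hasDerivAt_mul_cos_div_sin (h_sin θ hθ)).deriv]
  have h_double : sin θ * cos θ < θ := by
    have := sin_lt (by linarith [hθ.1] : 0 < 2 * θ)
    rw [sin_two_mul] at this
    linarith
  have := h_sin θ hθ
  exact div_neg_of_neg_of_pos (by linarith) (by positivity)

lemma mul_cos_div_sin_eq_cos_div_sinc {θ : ℝ} (hθ : θ ≠ 0) :
    θ * cos θ / sin θ = cos θ / sinc θ := by
  rw [sinc_of_ne_zero hθ, div_div_eq_mul_div, mul_comm]

lemma tendsto_gammaP_zero :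
    Tendsto gammaP (𝓝[Ioo 0 1] 0) (𝓝 0) := by
  have h_cont : ContinuousAt (fun p : ℝ ↦ 1 - cos (arccos √(1 - p)) / sinc (arccos √(1 - p))) 0 :=
    by fun_prop (disch := simp)
  have h_eq : (fun p : ℝ ↦ 1 - cos (arccos √(1 - p)) / sinc (arccos √(1 - p))) =ᶠ[𝓝[Ioo 0 1] 0]
      gammaP := by
    filter_upwards [self_mem_nhdsWithin] with p hp
    rw [gammaP_eq_one_sub_mul_cos_div_sin (Ioo_subset_Icc_self hp),
      mul_cos_div_sin_eq_cos_div_sinc (arccos_sqrt_one_sub_mem_Ioo hp).1.ne']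
  simpa using (h_cont.tendsto.mono_left nhdsWithin_le_nhds).congr' h_eq

lemma tendsto_gammaP_one :
    Tendsto gammaP (𝓝[Ioo 0 1] 1) (𝓝 1) := by
  have h_cont : ContinuousAt gammaP 1 := by
    unfold gammaP
    fun_prop (disch := norm_num)
  simpa [gammaP] using h_cont.tendsto.mono_left nhdsWithin_le_nhds

/-- For `p ∈ (0,1)`: `0 < γ_p < 1`, `γ_p` is strictly increasing in `p`,
`γ_p → 0` as `p → 0⁺`, and `γ_p → 1` as `p → 1⁻`. -/
theorem gammaP_properties :
    (∀ p ∈ Set.Ioo (0 : ℝ) 1, 0 < gammaP p ∧ gammaP p < 1) ∧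
    StrictMonoOn gammaP (Set.Ioo (0 : ℝ) 1) ∧
    Filter.Tendsto gammaP (nhdsWithin 0 (Set.Ioo (0 : ℝ) 1)) (nhds 0) ∧
    Filter.Tendsto gammaP (nhdsWithin 1 (Set.Ioo (0 : ℝ) 1)) (nhds 1) := by
  have h_eq := fun p (hp : p ∈ Ioo (0 : ℝ) 1) ↦
    gammaP_eq_one_sub_mul_cos_div_sin (Ioo_subset_Icc_self hp)
  have h_angle_mem : ∀ p ∈ Ioo (0 : ℝ) 1, arccos √(1 - p) ∈ Ioo 0 π := fun p hp ↦
    Ioo_subset_Ioo_right (by linarith [pi_pos]) (arccos_sqrt_one_sub_mem_Ioo hp)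
  refine ⟨fun p hp ↦ ?_, fun p hp q hq hpq ↦ ?_, tendsto_gammaP_zero, tendsto_gammaP_one⟩
  · have h_bounds := mul_cos_div_sin_mem_Ioo (arccos_sqrt_one_sub_mem_Ioo hp)
    rw [h_eq p hp]
    exact ⟨by linarith [h_bounds.2], by linarith [h_bounds.1]⟩
  · have h_anti := strictAntiOn_mul_cos_div_sin (h_angle_mem p hp) (h_angle_mem q hq)
      (strictMonoOn_arccos_sqrt_one_sub (Ioo_subset_Icc_self hp) (Ioo_subset_Icc_self hq) hpq)
    rw [h_eq p hp, h_eq q hq]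
    linarith
end

section
/- ∫_{1−p}^{1} [ (1/p) − √((1−p)·x_p(y)·y)/(p·y) ] dy = 1 − √((1−p)/p)·arccos(√(1−p)), where x_p(y) = (√(p(1−y)) + √(y(1−p)))² and p ∈ (0,1). -/
/-!
Multiplying out the square root, the integrand is `1 - √((1-p)/p) · √((1-y)/y)` on `[1-p, 1]`, and
`y ↦ √(y(1-y)) - arccos √y` is an antiderivative of `√((1-y)/y)` on `(0, 1)`. Its value at `1` is
`0`, so the correction integral is `arccos √(1-p) - √(p(1-p))`, and the `√(p(1-p))` term
contributes exactly `1 - p`, which tops the length `p` of the interval up to `1`.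
-/

open Real MeasureTheory intervalIntegral

theorem sqrt_mul_sq_sqrt_add_sqrt_mul {a b c d : ℝ} (ha : 0 ≤ a) (hb : 0 ≤ b) (hd : 0 ≤ d) :
    √(a * (√(b * c) + √(d * a)) ^ 2 * d) = √(a * b) * √(c * d) + a * d := by
  have had : √(a * d) ^ 2 = a * d := sq_sqrt (mul_nonneg ha hd)
  have hsq : a * (√(b * c) + √(d * a)) ^ 2 * d = (√(a * d) * (√(b * c) + √(d * a))) ^ 2 := by
    rw [mul_pow, had]; ring
  rw [hsq, sqrt_sq (by positivity), mul_add, ← sqrt_mul (mul_nonneg ha hd),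
    ← sqrt_mul (mul_nonneg ha hd), ← sqrt_mul (mul_nonneg ha hb),
    show a * d * (d * a) = (a * d) ^ 2 by ring, sqrt_sq (mul_nonneg ha hd)]
  ring_nf

theorem sqrt_mul_div_self {a b : ℝ} (hb : 0 < b) : √(a * b) / b = √(a / b) := by
  rw [sqrt_div' _ hb.le, sqrt_mul' _ hb.le, mul_div_assoc, sqrt_div_self', mul_one_div]

theorem hasDerivAt_sqrt_mul_one_sub_sub_arccos_sqrt {y : ℝ} (hy0 : 0 < y) (hy1 : y < 1) :
    HasDerivAt (fun y => √(y * (1 - y)) - arccos √y) (√((1 - y) / y)) y := by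
  have hsqrt_ne_one : √y ≠ 1 := by
    rw [Ne, sqrt_eq_one]; exact hy1.ne
  have hpoly : y * (1 - y) ≠ 0 := by nlinarith
  have h := (((hasDerivAt_id y).mul ((hasDerivAt_const y 1).sub (hasDerivAt_id y))).sqrt hpoly).sub
    ((hasDerivAt_arccos (by linarith [sqrt_nonneg y]) hsqrt_ne_one).comp y (hasDerivAt_sqrt hy0.ne'))
  refine h.congr_deriv ?_
  simp only [Pi.mul_apply, Pi.sub_apply, id, sq_sqrt hy0.le]
  rw [sqrt_div' _ hy0.le, sqrt_mul hy0.le]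
  have hs : 0 < √y := sqrt_pos.2 hy0
  have ht : 0 < √(1 - y) := sqrt_pos.2 (by linarith)
  field_simp
  rw [sq_sqrt (by linarith)]
  ring

theorem intervalIntegrable_sqrt_one_sub_div_self {a : ℝ} (ha0 : 0 < a) (ha1 : a ≤ 1) :
    IntervalIntegrable (fun y => √((1 - y) / y)) volume a 1 :=
  ContinuousOn.intervalIntegrable_of_Icc ha1 <|
    ((continuousOn_const.sub continuousOn_id).div continuousOn_id
      fun _ hy => (ha0.trans_le hy.1).ne').sqrt

theorem integral_sqrt_one_sub_div_self {a : ℝ} (ha0 : 0 < a) (ha1 : a ≤ 1) :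
    ∫ y in a..1, √((1 - y) / y) = arccos √a - √(a * (1 - a)) := by
  rw [integral_eq_sub_of_hasDerivAt_of_le ha1 (by fun_prop)
    (fun y hy => hasDerivAt_sqrt_mul_one_sub_sub_arccos_sqrt (ha0.trans_le hy.1.le) hy.2)
    (intervalIntegrable_sqrt_one_sub_div_self ha0 ha1)]
  simp

/-- The total singular mass of the Grothendieck permuton:
`∫_{1−p}^{1} [1/p − √((1−p)·x_p(y)·y)/(p·y)] dy = 1 − √((1−p)/p)·arccos(√(1−p))`,
where `x_p(y) = (√(p(1−y)) + √(y(1−p)))²` and `p ∈ (0,1)`. -/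
theorem singular_mass_integral (p : ℝ) (hp : p ∈ Set.Ioo (0 : ℝ) 1) :
    (∫ y in (1 - p)..1,
        (1 / p - Real.sqrt ((1 - p) *
          ((Real.sqrt (p * (1 - y)) + Real.sqrt (y * (1 - p))) ^ 2) * y) / (p * y))) =
      1 - Real.sqrt ((1 - p) / p) * Real.arccos (Real.sqrt (1 - p)) := by
  obtain ⟨hp0, hp1⟩ := hp
  have hq0 : 0 < 1 - p := by linarith
  have hq1 : 1 - p ≤ 1 := by linarith
  have hintegrand : Set.EqOn
      (fun y => 1 / p - √((1 - p) * (√(p * (1 - y)) + √(y * (1 - p))) ^ 2 * y) / (p * y))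
      (fun y => 1 - √((1 - p) / p) * √((1 - y) / y)) (Set.uIcc (1 - p) 1) := by
    intro y hy
    rw [Set.uIcc_of_le hq1] at hy
    have hy0 : 0 < y := hq0.trans_le hy.1
    dsimp only
    rw [sqrt_mul_sq_sqrt_add_sqrt_mul hq0.le hp0.le hy0.le, ← sqrt_mul_div_self hp0,
      ← sqrt_mul_div_self hy0]
    field_simp
    ring
  have hC : √((1 - p) / p) * √((1 - p) * p) = 1 - p := by
    rw [← sqrt_mul (div_nonneg hq0.le hp0.le),
      show (1 - p) / p * ((1 - p) * p) = (1 - p) ^ 2 by field_simp, sqrt_sq hq0.le]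
  rw [integral_congr hintegrand, integral_sub intervalIntegrable_const
    ((intervalIntegrable_sqrt_one_sub_div_self hq0 hq1).const_mul _), intervalIntegral.integral_const_mul,
    integral_sqrt_one_sub_div_self hq0 hq1, integral_one, sub_sub_cancel, mul_sub, hC]
  ring
end
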